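/- arXiv:1411.3086 — 3 statements merged into one kernel-verified Lean document; each statement's English description precedes it below -/
import Mathlib

section
/- Let ι be a countable index type, c > 0, t ∈ ℝ, and λ : ι → ℝ be such that λ i ≤ min{c, 1} for every i and the family i ↦ (λ i)² is summable. Then the family i ↦ (cos(t·√(c − λ i)) − cos(t·√c))² is summable. -/
lemma cos_lip (x y : ℝ) : |Real.cos x - Real.cos y| ≤ |x - y| := by
  rw [Real.cos_sub_cos, abs_mul, abs_mul, abs_neg]
  have h1 := Real.abs_sin_le_one ((x + y) / 2)
  have h2 : |Real.sin ((x - y) / 2)| ≤ |(x - y) / 2| := Real.abs_sin_le_abs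
  have h3 : |(x - y) / 2| = |x - y| / 2 := by rw [abs_div]; norm_num
  have h4 : |(2 : ℝ)| = 2 := by norm_num
  rw [h4]
  nlinarith [abs_nonneg (Real.sin ((x - y) / 2)), abs_nonneg (x - y)]

/-- If `ι` is countable, `c > 0`, `t ∈ ℝ`, `l i ≤ min c 1` for all `i`, and
`i ↦ (l i)²` is summable, then `i ↦ (cos(t√(c − l i)) − cos(t√c))²` is summable. -/
theorem stmt_9 {ι : Type*} [Countable ι] (c : ℝ) (hc : 0 < c) (t : ℝ)
    (l : ι → ℝ) (hl : ∀ i : ι, l i ≤ min c 1)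
    (hsum : Summable fun i : ι => (l i) ^ 2) :
    Summable fun i : ι =>
      (Real.cos (t * Real.sqrt (c - l i)) - Real.cos (t * Real.sqrt c)) ^ 2 := by
  have hb2 : Real.sqrt c ^ 2 = c := Real.sq_sqrt hc.le
  have hbound : ∀ i, (Real.cos (t * Real.sqrt (c - l i)) - Real.cos (t * Real.sqrt c)) ^ 2
      ≤ (t ^ 2 / c) * (l i) ^ 2 := by
    intro i
    have hlc : l i ≤ c := (hl i).trans (min_le_left _ _)
    have h0 : 0 ≤ c - l i := by linarith
    set a := Real.sqrt (c - l i) with ha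
    set b := Real.sqrt c with hbb
    have hb0 : 0 < b := Real.sqrt_pos.mpr hc
    have ha0 : 0 ≤ a := Real.sqrt_nonneg _
    have ha2 : a ^ 2 = c - l i := Real.sq_sqrt h0
    have hab : 0 < a + b := by linarith
    have hcos : |Real.cos (t * a) - Real.cos (t * b)| ≤ |t * a - t * b| :=
      cos_lip _ _
    have hd : |a - b| ≤ |l i| / b := by
      rw [le_div_iff₀ hb0]
      have key : |a - b| * (a + b) = |l i| := by
        rw [← abs_of_pos hab, ← abs_mul]
        have : (a - b) * (a + b) = -(l i) := by nlinarith
        rw [this, abs_neg]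
      calc |a - b| * b ≤ |a - b| * (a + b) := by
            have := abs_nonneg (a - b); nlinarith
        _ = |l i| := key
    have hD : |Real.cos (t * a) - Real.cos (t * b)| ≤ |t| * (|l i| / b) := by
      calc |Real.cos (t * a) - Real.cos (t * b)| ≤ |t * a - t * b| := hcos
        _ = |t| * |a - b| := by rw [← mul_sub, abs_mul]
        _ ≤ |t| * (|l i| / b) := by
            exact mul_le_mul_of_nonneg_left hd (abs_nonneg t)
    have hsq : (Real.cos (t * a) - Real.cos (t * b)) ^ 2 ≤ (|t| * (|l i| / b)) ^ 2 := by
      rw [← sq_abs]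
      exact pow_le_pow_left₀ (abs_nonneg _) hD 2
    calc (Real.cos (t * a) - Real.cos (t * b)) ^ 2 ≤ (|t| * (|l i| / b)) ^ 2 := hsq
      _ = t ^ 2 / c * (l i) ^ 2 := by
          rw [mul_pow, div_pow, sq_abs, sq_abs, hb2]; ring
  exact Summable.of_nonneg_of_le (fun i => sq_nonneg _) hbound (hsum.mul_left _)
end

section
/- Work in L²((−1,1), ℂ) with inner product ⟨g, h⟩ = ∫_{−1}^{1} conj(g)·h. Let e_k^p(x) := (1/√2)·exp(iπkx) for k ∈ ℤ (the periodic Hilbert basis), and let e_k^D(x) := sin((kπ/2)(x + 1)) for integers k ≥ 1 (the Dirichlet sine Hilbert basis). Let C ∈ L²((−1,1)) be real-valued and even, and let u ∈ L²((−1,1), ℂ) be odd (u(−x) = −u(x) a.e.). Then, with equality in L²: ∑'_{k∈ℤ} ⟨e_k^p, C⟩·⟨e_k^p, u⟩ • e_k^p = ∑'_{k≥1} ⟨e_k^p, C⟩·⟨e_{2k}^D, u⟩ • e_{2k}^D. -/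
open MeasureTheory Complex

/-! Reflection `x ↦ -x` preserves the measure on `(-1, 1)`, so for odd `u` the periodic
coefficients satisfy `⟨e_{-k}, u⟩ = -⟨e_k, u⟩` (in particular `⟨e_0, u⟩ = 0`), while for even `C`
`⟨e_{-k}, C⟩ = ⟨e_k, C⟩`. Grouping the terms `k` and `-k` of the periodic series, each pair is the
Dirichlet term of index `2k`: by Euler's formula `e^D_{2k} = c_k (e_k - e_{-k})` with
`|c_k|² = 1/2`. -/

instance isNegInvariant_volume_restrict_Ioo (a : ℝ) :
    (volume.restrict (Set.Ioo (-a) a)).IsNegInvariant := by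
  have hsymm : Neg.neg ⁻¹' Set.Ioo (-a) a = Set.Ioo (-a) a := by
    ext x
    simp only [Set.mem_preimage, Set.mem_Ioo]
    constructor <;> rintro ⟨h₁, h₂⟩ <;> constructor <;> linarith
  have h := (Measure.measurePreserving_neg (volume : Measure ℝ)).restrict_preimage
    (s := Set.Ioo (-a) a) measurableSet_Ioo
  rw [hsymm] at h
  exact ⟨h.map_eq⟩

theorem L2.inner_eq_inner_of_ae_comp_neg {G 𝕜 E : Type*} [MeasurableSpace G] [AddGroup G]
    [MeasurableNeg G] {μ : Measure G} [μ.IsNegInvariant] [RCLike 𝕜] [NormedAddCommGroup E]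
    [InnerProductSpace 𝕜 E] {f f' g h : Lp E 2 μ} (hg : ∀ᵐ x ∂μ, g x = h (-x))
    (hf : ∀ᵐ x ∂μ, f (-x) = f' x) :
    inner 𝕜 g f = inner 𝕜 h f' :=
  calc inner 𝕜 g f = ∫ x, inner 𝕜 (h (-x)) (f x) ∂μ := by
        rw [L2.inner_def]
        exact integral_congr_ae (hg.mono fun x hx => by dsimp only; rw [hx])
    _ = ∫ x, inner 𝕜 (h x) (f (-x)) ∂μ := by
        rw [← integral_neg_eq_self (fun x => inner 𝕜 (h (-x)) (f x)) μ]
        simp only [neg_neg]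
    _ = inner 𝕜 h f' := by
        rw [L2.inner_def]
        exact integral_congr_ae (hf.mono fun x hx => by dsimp only; rw [hx])

theorem HilbertBasis.summable_inner_mul_inner_smul {ι 𝕜 E : Type*} [RCLike 𝕜]
    [NormedAddCommGroup E] [InnerProductSpace 𝕜 E] [CompleteSpace E]
    (b : HilbertBasis ι 𝕜 E) (x y : E) :
    Summable fun i => (inner 𝕜 (b i) x * inner 𝕜 (b i) y) • b i := by
  refine Summable.of_norm ((b.summable_inner_mul_inner x y).norm.congr fun i => ?_)
  rw [norm_smul, b.orthonormal.1 i, mul_one, norm_mul, norm_mul, norm_inner_symm]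

theorem tsum_int_eq_tsum_add_neg_of_apply_zero {E : Type*} [NormedAddCommGroup E]
    [CompleteSpace E] {f : ℤ → E} (hf : Summable f) (h0 : f 0 = 0) :
    ∑' k, f k = ∑' n : ℕ, (f (n + 1) + f (-(n + 1))) := by
  have hpos : Summable fun n : ℕ => f (n + 1) := hf.comp_injective fun a b h => by omega
  have hneg : Summable fun n : ℕ => f (-(n + 1)) := hf.comp_injective fun a b h => by omega
  rw [tsum_of_add_one_of_neg_add_one hpos hneg, h0, add_zero, hpos.tsum_add hneg]

theorem inner_mul_inner_smul_eq_of_eq_smul_sub {𝕜 E : Type*} [RCLike 𝕜] [NormedAddCommGroup E]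
    [InnerProductSpace 𝕜 E] {v w e x y : E} {c : 𝕜} (he : e = c • (v - w))
    (hc : ‖c‖ ^ 2 = 1 / 2) (hx : inner 𝕜 w x = inner 𝕜 v x) (hy : inner 𝕜 w y = -inner 𝕜 v y) :
    (inner 𝕜 v x * inner 𝕜 e y) • e
      = (inner 𝕜 v x * inner 𝕜 v y) • v + (inner 𝕜 w x * inner 𝕜 w y) • w := by
  have hcc : (starRingEnd 𝕜) c * c = 1 / 2 := by
    rw [RCLike.conj_mul, ← RCLike.ofReal_pow, hc]; push_cast; ring
  have hcoef : inner 𝕜 v x * ((starRingEnd 𝕜) c * (inner 𝕜 v y - -inner 𝕜 v y)) * c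
      = inner 𝕜 v x * inner 𝕜 v y := by
    linear_combination (2 * inner 𝕜 v x * inner 𝕜 v y) * hcc
  rw [he, inner_smul_left, inner_sub_left, hy, hx, smul_smul, hcoef, smul_sub, mul_neg, neg_smul,
    ← sub_eq_add_neg]

theorem ofReal_sin_odd_dirichlet (m : ℕ) (x : ℝ) :
    (Real.sin ((((2 * m + 1 : ℕ) : ℝ) + 1) * Real.pi / 2 * (x + 1)) : ℂ)
      = (I * (-1) ^ m / (Real.sqrt 2 : ℂ)) *
        ((Real.sqrt 2 : ℂ)⁻¹ * exp (I * Real.pi * (((m : ℤ) + 1 : ℤ) : ℂ) * x)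
          - (Real.sqrt 2 : ℂ)⁻¹ * exp (I * Real.pi * ((-((m : ℤ) + 1) : ℤ) : ℂ) * x)) := by
  have harg : (((2 * m + 1 : ℕ) : ℝ) + 1) * Real.pi / 2 * (x + 1)
      = (m + 1) * Real.pi * x + ((m + 1 : ℕ) : ℝ) * Real.pi := by push_cast; ring
  have hsqrt : (Real.sqrt 2 : ℂ) ^ 2 = 2 := by norm_cast; simp
  have hsqrt0 : (Real.sqrt 2 : ℂ) ≠ 0 := by norm_cast; positivity
  rw [harg, Real.sin_add_nat_mul_pi, ofReal_mul, ofReal_sin, Complex.sin]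
  field_simp
  rw [hsqrt]
  push_cast
  ring_nf

local notation "μ" => volume.restrict (Set.Ioo (-1 : ℝ) 1)

theorem inner_periodic_neg {e : ℤ → Lp ℂ 2 μ}
    (he : ∀ k : ℤ, (e k : ℝ → ℂ) =ᵐ[μ]
      fun x : ℝ => (Real.sqrt 2 : ℂ)⁻¹ * exp (I * Real.pi * (k : ℂ) * (x : ℂ)))
    (k : ℤ) {f f' : Lp ℂ 2 μ} (hf : ∀ᵐ x ∂μ, f (-x) = f' x) :
    inner ℂ (e (-k)) f = inner ℂ (e k) f' := by
  refine L2.inner_eq_inner_of_ae_comp_neg ?_ hf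
  filter_upwards [he (-k), (Measure.measurePreserving_neg μ).quasiMeasurePreserving.ae_eq_comp
    (he k)] with x hneg hreflect
  simp only [Function.comp_apply] at hreflect
  rw [hneg, hreflect]
  push_cast
  ring_nf

theorem inner_periodic_neg_of_odd {e : ℤ → Lp ℂ 2 μ}
    (he : ∀ k : ℤ, (e k : ℝ → ℂ) =ᵐ[μ]
      fun x : ℝ => (Real.sqrt 2 : ℂ)⁻¹ * exp (I * Real.pi * (k : ℂ) * (x : ℂ)))
    {u : Lp ℂ 2 μ} (hu : ∀ᵐ x ∂μ, u (-x) = -u x) (k : ℤ) :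
    inner ℂ (e (-k)) u = -inner ℂ (e k) u := by
  rw [← inner_neg_right]
  refine inner_periodic_neg he k ?_
  filter_upwards [hu, Lp.coeFn_neg u] with x hodd hneg
  rw [hodd, hneg, Pi.neg_apply]

theorem dirichlet_odd_eq_smul_sub {e : ℤ → Lp ℂ 2 μ}
    (he : ∀ k : ℤ, (e k : ℝ → ℂ) =ᵐ[μ]
      fun x : ℝ => (Real.sqrt 2 : ℂ)⁻¹ * exp (I * Real.pi * (k : ℂ) * (x : ℂ)))
    {d : ℕ → Lp ℂ 2 μ}
    (hd : ∀ n : ℕ, (d n : ℝ → ℂ) =ᵐ[μ]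
      fun x : ℝ => (Real.sin (((n : ℝ) + 1) * Real.pi / 2 * (x + 1)) : ℂ))
    (m : ℕ) :
    d (2 * m + 1) = (I * (-1) ^ m / (Real.sqrt 2 : ℂ)) • (e ((m : ℤ) + 1) - e (-((m : ℤ) + 1))) := by
  refine Lp.ext ?_
  filter_upwards [hd (2 * m + 1), he ((m : ℤ) + 1), he (-((m : ℤ) + 1)), Lp.coeFn_smul (I * (-1) ^ m / (Real.sqrt 2 : ℂ))
    (e ((m : ℤ) + 1) - e (-((m : ℤ) + 1))),
    Lp.coeFn_sub (e ((m : ℤ) + 1)) (e (-((m : ℤ) + 1)))] with x hsin hpos hneg hsmul hsub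
  rw [hsin, hsmul, Pi.smul_apply, hsub, Pi.sub_apply, hpos, hneg, smul_eq_mul]
  exact_mod_cast ofReal_sin_odd_dirichlet m x

theorem stmt_16_general
    (ep : HilbertBasis ℤ ℂ (Lp ℂ 2 (volume.restrict (Set.Ioo (-1 : ℝ) 1))))
    (hep : ∀ k : ℤ, (ep k : ℝ → ℂ) =ᵐ[volume.restrict (Set.Ioo (-1 : ℝ) 1)]
      fun x : ℝ => (Real.sqrt 2 : ℂ)⁻¹ * Complex.exp (Complex.I * Real.pi * (k : ℂ) * (x : ℂ)))
    (eD : HilbertBasis ℕ ℂ (Lp ℂ 2 (volume.restrict (Set.Ioo (-1 : ℝ) 1))))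
    (heD : ∀ n : ℕ, (eD n : ℝ → ℂ) =ᵐ[volume.restrict (Set.Ioo (-1 : ℝ) 1)]
      fun x : ℝ => (Real.sin (((n : ℝ) + 1) * Real.pi / 2 * (x + 1)) : ℂ))
    (C u : Lp ℂ 2 (volume.restrict (Set.Ioo (-1 : ℝ) 1)))
    (hCeven : ∀ᵐ x ∂(volume.restrict (Set.Ioo (-1 : ℝ) 1)), C (-x) = C x)
    (huodd : ∀ᵐ x ∂(volume.restrict (Set.Ioo (-1 : ℝ) 1)), u (-x) = -u x) :
    (∑' k : ℤ, ((inner ℂ (ep k) C : ℂ) * (inner ℂ (ep k) u : ℂ)) • ep k)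
      = ∑' m : ℕ, ((inner ℂ (ep ((m : ℤ) + 1)) C : ℂ) * (inner ℂ (eD (2 * m + 1)) u : ℂ))
          • eD (2 * m + 1) := by
  have hC (k : ℤ) : inner ℂ (ep (-k)) C = inner ℂ (ep k) C := inner_periodic_neg hep k hCeven
  have hu := inner_periodic_neg_of_odd hep huodd
  have hu₀ : inner ℂ (ep 0) u = 0 := by simpa [CharZero.eq_neg_self_iff] using hu 0
  have hcoeff (m : ℕ) : ‖I * (-1) ^ m / (Real.sqrt 2 : ℂ)‖ ^ 2 = 1 / 2 := by
    simp
  rw [tsum_int_eq_tsum_add_neg_of_apply_zero (ep.summable_inner_mul_inner_smul C u)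
    (by rw [hu₀, mul_zero, zero_smul])]
  exact tsum_congr fun m => (inner_mul_inner_smul_eq_of_eq_smul_sub
    (dirichlet_odd_eq_smul_sub hep heD m) (hcoeff m) (hC _) (hu _)).symm

/-- In `L²((−1,1), ℂ)`, let `ep` be the periodic Hilbert basis
(`ep k = (1/√2)e^{iπkx}`, `k ∈ ℤ`) and `eD` the Dirichlet sine Hilbert basis, indexed
here by `n ∈ ℕ` with `eD n = sin(((n+1)π/2)(x+1))` (so `eD n` is the eigenfunction
`e^D_{n+1}`, `n + 1 ≥ 1`). If `C` is real-valued and even and `u` is odd, then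
`∑'_{k∈ℤ} ⟨ep k, C⟩⟨ep k, u⟩ • ep k = ∑'_{k≥1} ⟨ep k, C⟩⟨e^D_{2k}, u⟩ • e^D_{2k}`,
the right-hand side being `∑'_{m∈ℕ} ⟨ep (m+1), C⟩⟨eD (2m+1), u⟩ • eD (2m+1)`. -/
theorem stmt_16
    (ep : HilbertBasis ℤ ℂ (Lp ℂ 2 (volume.restrict (Set.Ioo (-1 : ℝ) 1))))
    (hep : ∀ k : ℤ, (ep k : ℝ → ℂ) =ᵐ[volume.restrict (Set.Ioo (-1 : ℝ) 1)]
      fun x : ℝ => (Real.sqrt 2 : ℂ)⁻¹ * Complex.exp (Complex.I * Real.pi * (k : ℂ) * (x : ℂ)))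
    (eD : HilbertBasis ℕ ℂ (Lp ℂ 2 (volume.restrict (Set.Ioo (-1 : ℝ) 1))))
    (heD : ∀ n : ℕ, (eD n : ℝ → ℂ) =ᵐ[volume.restrict (Set.Ioo (-1 : ℝ) 1)]
      fun x : ℝ => (Real.sin (((n : ℝ) + 1) * Real.pi / 2 * (x + 1)) : ℂ))
    (C u : Lp ℂ 2 (volume.restrict (Set.Ioo (-1 : ℝ) 1)))
    (hCreal : ∀ᵐ x ∂(volume.restrict (Set.Ioo (-1 : ℝ) 1)), (C x).im = 0)
    (hCeven : ∀ᵐ x ∂(volume.restrict (Set.Ioo (-1 : ℝ) 1)), C (-x) = C x)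
    (huodd : ∀ᵐ x ∂(volume.restrict (Set.Ioo (-1 : ℝ) 1)), u (-x) = -u x) :
    (∑' k : ℤ, ((inner ℂ (ep k) C : ℂ) * (inner ℂ (ep k) u : ℂ)) • ep k)
      = ∑' m : ℕ, ((inner ℂ (ep ((m : ℤ) + 1)) C : ℂ) * (inner ℂ (eD (2 * m + 1)) u : ℂ))
          • eD (2 * m + 1) :=
  stmt_16_general ep hep eD heD C u hCeven huodd
end

section
/- Work in L²((−1,1), ℂ) with inner product ⟨g, h⟩ = ∫_{−1}^{1} conj(g)·h. Let e_k^a(x) := (1/√2)·exp(iπ(k + 1/2)x) for k ∈ ℤ (the antiperiodic Hilbert basis), and let e_k^D(x) := sin((kπ/2)(x + 1)) for integers k ≥ 1 (the Dirichlet sine Hilbert basis). Let C ∈ L²((−1,1)) be real-valued and even, and let u ∈ L²((−1,1), ℂ) be even (u(−x) = u(x) a.e.). Then, with equality in L²: ∑'_{k∈ℤ} ⟨e_k^a, C⟩·⟨e_k^a, u⟩ • e_k^a = ∑'_{k∈ℕ} ⟨e_k^a, C⟩·⟨e_{2k+1}^D, u⟩ • e_{2k+1}^D. -/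
/-!
With `θ = π(k + 1/2)x`, the odd Dirichlet mode is `sin(θ + π(k + 1/2)) = (-1)^k cos θ`, i.e.
`e^D_{2k+1} = (-1)^k (e^a_k + e^a_{-1-k}) / √2`. Reflection `x ↦ -x` exchanges `e^a_k` and
`e^a_{-1-k}`, so an even function has equal coefficients on the two modes. Grouping the sum
over `ℤ` into the pairs `{k, -1-k}`, each pair then contributes exactly the `k`-th term on the
right.
-/

open MeasureTheory InnerProductSpace
open scoped ComplexConjugate

section InnerProductSpace

variable {ι 𝕜 E : Type*} [RCLike 𝕜] [NormedAddCommGroup E] [InnerProductSpace 𝕜 E]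

theorem Orthonormal.summable_inner_mul_inner_smul [CompleteSpace E] {v : ι → E}
    (hv : Orthonormal 𝕜 v) (x y : E) :
    Summable fun i => (⟪v i, x⟫_𝕜 * ⟪v i, y⟫_𝕜) • v i := by
  refine .of_norm_bounded
    (((hv.inner_products_summable (x := x)).add (hv.inner_products_summable (x := y))).div_const 2)
    fun i => ?_
  rw [norm_smul, hv.1 i, mul_one, norm_mul]
  nlinarith [two_mul_le_add_sq ‖⟪v i, x⟫_𝕜‖ ‖⟪v i, y⟫_𝕜‖]

theorem inner_mul_inner_smul_smul_add {v w x y : E} {c : 𝕜} (hc : ‖c‖ ^ 2 = 2⁻¹)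
    (hx : ⟪w, x⟫_𝕜 = ⟪v, x⟫_𝕜) (hy : ⟪w, y⟫_𝕜 = ⟪v, y⟫_𝕜) :
    (⟪v, x⟫_𝕜 * ⟪c • (v + w), y⟫_𝕜) • c • (v + w)
      = (⟪v, x⟫_𝕜 * ⟪v, y⟫_𝕜) • v + (⟪w, x⟫_𝕜 * ⟪w, y⟫_𝕜) • w := by
  have hcc : conj c * c = 2⁻¹ := by
    rw [RCLike.conj_mul, ← RCLike.ofReal_pow, hc, RCLike.ofReal_inv, RCLike.ofReal_ofNat]
  rw [inner_smul_left, inner_add_left, hx, hy, smul_smul, ← smul_add]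
  congr 1
  linear_combination (2 * ⟪v, x⟫_𝕜 * ⟪v, y⟫_𝕜) * hcc

end InnerProductSpace

theorem L2.inner_eq_of_ae_eq_comp {α 𝕜 : Type*} [RCLike 𝕜] [MeasurableSpace α]
    {μ : Measure α} {T : α → α} (hT : MeasurePreserving T μ μ) (hTe : MeasurableEmbedding T)
    {f g f' g' : Lp 𝕜 2 μ} (hf : f' =ᵐ[μ] f ∘ T) (hg : g' =ᵐ[μ] g ∘ T) :
    ⟪f', g'⟫_𝕜 = ⟪f, g⟫_𝕜 := by
  rw [L2.inner_def, L2.inner_def, ← hT.integral_comp hTe fun x => ⟪f x, g x⟫_𝕜]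
  refine integral_congr_ae ?_
  filter_upwards [hf, hg] with x hfx hgx
  simp only [hfx, hgx, Function.comp_apply]

theorem measurePreserving_neg_restrict_Ioo (a : ℝ) :
    MeasurePreserving Neg.neg (volume.restrict (Set.Ioo (-a) a))
      (volume.restrict (Set.Ioo (-a) a)) := by
  have h := (Measure.measurePreserving_neg (volume : Measure ℝ)).restrict_preimage
    (measurableSet_Ioo (a := -a) (b := a))
  rwa [Set.neg_preimage, Set.neg_Ioo, neg_neg] at h

noncomputable def antiperiodicMode (k : ℤ) (x : ℝ) : ℂ :=
  (Real.sqrt 2 : ℂ)⁻¹ * Complex.exp (Complex.I * Real.pi * ((k : ℂ) + 1 / 2) * (x : ℂ))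

theorem antiperiodicMode_neg (k : ℤ) (x : ℝ) :
    antiperiodicMode k (-x) = antiperiodicMode (-1 - k) x := by
  simp only [antiperiodicMode]
  push_cast
  ring_nf

theorem ofReal_sin_odd_eq_antiperiodicMode (k : ℕ) (x : ℝ) :
    (Real.sin ((((2 * k : ℕ) : ℝ) + 1) * Real.pi / 2 * (x + 1)) : ℂ)
      = ((-1) ^ k * (Real.sqrt 2 : ℂ)⁻¹)
        * (antiperiodicMode k x + antiperiodicMode (-1 - k) x) := by
  set t : ℝ := (k + 1 / 2) * Real.pi * x
  have hangle :
      (((2 * k : ℕ) : ℝ) + 1) * Real.pi / 2 * (x + 1) = t + Real.pi / 2 + k * Real.pi := by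
    push_cast; ring
  have hsqrt : (Real.sqrt 2 : ℂ)⁻¹ * (Real.sqrt 2 : ℂ)⁻¹ = 2⁻¹ := by
    rw [← mul_inv, ← Complex.ofReal_mul, Real.mul_self_sqrt zero_le_two, Complex.ofReal_ofNat]
  have hmodes : antiperiodicMode k x + antiperiodicMode (-1 - k) x
      = (Real.sqrt 2 : ℂ)⁻¹ * (2 * Complex.cos t) := by
    rw [Complex.two_cos, antiperiodicMode, antiperiodicMode, Complex.ofReal_mul,
      Complex.ofReal_mul]
    push_cast
    ring_nf
  rw [hangle, Real.sin_add_nat_mul_pi, Real.sin_add_pi_div_two, hmodes]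
  push_cast
  linear_combination (-2) * (-1) ^ k * Complex.cos t * hsqrt

local notation "μI" => volume.restrict (Set.Ioo (-1 : ℝ) 1)

theorem inner_antiperiodic_neg_sub_one_of_even {ea : ℤ → Lp ℂ 2 μI}
    (hea : ∀ k, ea k =ᵐ[μI] antiperiodicMode k) {f : Lp ℂ 2 μI}
    (hf : ∀ᵐ x ∂μI, f (-x) = f x) (k : ℤ) : ⟪ea (-1 - k), f⟫_ℂ = ⟪ea k, f⟫_ℂ := by
  have hneg := measurePreserving_neg_restrict_Ioo 1
  refine L2.inner_eq_of_ae_eq_comp hneg (MeasurableEquiv.neg ℝ).measurableEmbedding ?_ ?_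
  · have hcomp := hneg.quasiMeasurePreserving.ae_eq_comp (hea k)
    filter_upwards [hea (-1 - k), hcomp] with x hx hcx
    rw [hx, hcx, Function.comp_apply, antiperiodicMode_neg]
  · filter_upwards [hf] with x hx
    exact hx.symm

theorem dirichlet_odd_eq_smul_add {ea : ℤ → Lp ℂ 2 μI}
    (hea : ∀ k, ea k =ᵐ[μI] antiperiodicMode k) {eD : ℕ → Lp ℂ 2 μI}
    (heD : ∀ n : ℕ, eD n =ᵐ[μI]
      fun x => (Real.sin (((n : ℝ) + 1) * Real.pi / 2 * (x + 1)) : ℂ))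
    (k : ℕ) :
    eD (2 * k) = ((-1) ^ k * (Real.sqrt 2 : ℂ)⁻¹) • (ea k + ea (-1 - k)) := by
  refine Lp.ext ?_
  filter_upwards [heD (2 * k), hea k, hea (-1 - k), Lp.coeFn_add (ea k) (ea (-1 - k)),
    Lp.coeFn_smul ((-1) ^ k * (Real.sqrt 2 : ℂ)⁻¹) (ea k + ea (-1 - k))]
    with x hD hk hk' hadd hsmul
  rw [hD, hsmul, Pi.smul_apply, hadd, Pi.add_apply, hk, hk', smul_eq_mul]
  exact ofReal_sin_odd_eq_antiperiodicMode k x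

theorem norm_neg_one_pow_mul_inv_sqrt_two_sq (k : ℕ) :
    ‖(-1) ^ k * (Real.sqrt 2 : ℂ)⁻¹‖ ^ 2 = 2⁻¹ := by
  rw [norm_mul, norm_pow, norm_neg, norm_one, one_pow, one_mul, norm_inv, Complex.norm_real,
    Real.norm_eq_abs, abs_of_nonneg (Real.sqrt_nonneg 2), inv_pow, Real.sq_sqrt zero_le_two]

theorem stmt_17_general
    (ea : HilbertBasis ℤ ℂ (Lp ℂ 2 (volume.restrict (Set.Ioo (-1 : ℝ) 1))))
    (hea : ∀ k : ℤ, (ea k : ℝ → ℂ) =ᵐ[volume.restrict (Set.Ioo (-1 : ℝ) 1)]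
      fun x : ℝ => (Real.sqrt 2 : ℂ)⁻¹ *
        Complex.exp (Complex.I * Real.pi * ((k : ℂ) + 1 / 2) * (x : ℂ)))
    (eD : HilbertBasis ℕ ℂ (Lp ℂ 2 (volume.restrict (Set.Ioo (-1 : ℝ) 1))))
    (heD : ∀ n : ℕ, (eD n : ℝ → ℂ) =ᵐ[volume.restrict (Set.Ioo (-1 : ℝ) 1)]
      fun x : ℝ => (Real.sin (((n : ℝ) + 1) * Real.pi / 2 * (x + 1)) : ℂ))
    (C u : Lp ℂ 2 (volume.restrict (Set.Ioo (-1 : ℝ) 1)))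
    (hCeven : ∀ᵐ x ∂(volume.restrict (Set.Ioo (-1 : ℝ) 1)), C (-x) = C x)
    (hueven : ∀ᵐ x ∂(volume.restrict (Set.Ioo (-1 : ℝ) 1)), u (-x) = u x) :
    (∑' k : ℤ, ((inner ℂ (ea k) C : ℂ) * (inner ℂ (ea k) u : ℂ)) • ea k)
      = ∑' k : ℕ, ((inner ℂ (ea (k : ℤ)) C : ℂ) * (inner ℂ (eD (2 * k)) u : ℂ))
          • eD (2 * k) := by
  rw [← tsum_nat_add_neg_add_one (ea.orthonormal.summable_inner_mul_inner_smul C u)]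
  refine tsum_congr fun k => ?_
  have hidx : -((k : ℤ) + 1) = -1 - k := by ring
  rw [dirichlet_odd_eq_smul_add hea heD, hidx]
  exact (inner_mul_inner_smul_smul_add (norm_neg_one_pow_mul_inv_sqrt_two_sq k)
    (inner_antiperiodic_neg_sub_one_of_even hea hCeven k)
    (inner_antiperiodic_neg_sub_one_of_even hea hueven k)).symm

/-- In `L²((−1,1), ℂ)`, let `ea` be the antiperiodic Hilbert basis
(`ea k = (1/√2)e^{iπ(k+1/2)x}`, `k ∈ ℤ`) and `eD` the Dirichlet sine Hilbert basis,
indexed here by `n ∈ ℕ` with `eD n = sin(((n+1)π/2)(x+1))` (so `eD n` is the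
eigenfunction `e^D_{n+1}`). If `C` is real-valued and even and `u` is even, then
`∑'_{k∈ℤ} ⟨ea k, C⟩⟨ea k, u⟩ • ea k = ∑'_{k∈ℕ} ⟨ea k, C⟩⟨e^D_{2k+1}, u⟩ • e^D_{2k+1}`,
the right-hand side being `∑'_{k∈ℕ} ⟨ea k, C⟩⟨eD (2k), u⟩ • eD (2k)`. -/
theorem stmt_17
    (ea : HilbertBasis ℤ ℂ (Lp ℂ 2 (volume.restrict (Set.Ioo (-1 : ℝ) 1))))
    (hea : ∀ k : ℤ, (ea k : ℝ → ℂ) =ᵐ[volume.restrict (Set.Ioo (-1 : ℝ) 1)]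
      fun x : ℝ => (Real.sqrt 2 : ℂ)⁻¹ *
        Complex.exp (Complex.I * Real.pi * ((k : ℂ) + 1 / 2) * (x : ℂ)))
    (eD : HilbertBasis ℕ ℂ (Lp ℂ 2 (volume.restrict (Set.Ioo (-1 : ℝ) 1))))
    (heD : ∀ n : ℕ, (eD n : ℝ → ℂ) =ᵐ[volume.restrict (Set.Ioo (-1 : ℝ) 1)]
      fun x : ℝ => (Real.sin (((n : ℝ) + 1) * Real.pi / 2 * (x + 1)) : ℂ))
    (C u : Lp ℂ 2 (volume.restrict (Set.Ioo (-1 : ℝ) 1)))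
    (hCreal : ∀ᵐ x ∂(volume.restrict (Set.Ioo (-1 : ℝ) 1)), (C x).im = 0)
    (hCeven : ∀ᵐ x ∂(volume.restrict (Set.Ioo (-1 : ℝ) 1)), C (-x) = C x)
    (hueven : ∀ᵐ x ∂(volume.restrict (Set.Ioo (-1 : ℝ) 1)), u (-x) = u x) :
    (∑' k : ℤ, ((inner ℂ (ea k) C : ℂ) * (inner ℂ (ea k) u : ℂ)) • ea k)
      = ∑' k : ℕ, ((inner ℂ (ea (k : ℤ)) C : ℂ) * (inner ℂ (eD (2 * k)) u : ℂ))
          • eD (2 * k) :=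
  stmt_17_general ea hea eD heD C u hCeven hueven
end
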